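/- Let R = k[x,y,z]/(xy − z², x² − yz) for a field k and let p = (x̄, z̄), which is a prime ideal of R. Then there is no finitely generated R-module M with a submodule N admitting an RPE filtration N ⊂^{p} N₁ ⊂^{p} M; equivalently, p² is not the generalized prime ideal factorization of any submodule. -/

import Mathlib

/-!
Since `p` is maximal in `Ass (M/N)`, every regular `p`-prime extension of `N` in `M` is the
colon submodule `(N :_M p)`. In `R` the relations `x̄ȳ = z̄²` and `z̄ȳ = x̄²` give `ȳ p ⊆ p²`.
For a filtration `N ⊂ N₁ = (N :_M p) ⊂ M` with `p M ⊆ N₁` this yields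
`ȳ p M ⊆ p² M ⊆ p N₁ ⊆ N`, hence `ȳ M ⊆ N₁` and `ȳ ∈ (N₁ :_R M) = p`. But `ȳ ∉ p`: the ideal
`(x, z)` of `k[x,y,z]` is the kernel of `x, z ↦ 0`, so it is prime, avoids `y`, and contains
both relations.
-/

variable {R : Type*} [CommRing R] {M : Type*} [AddCommGroup M] [Module R M]

/-- The colon submodule `(N :_M I) = {x ∈ M | I • x ⊆ N}`. -/
def colonSubmodule (N : Submodule R M) (I : Ideal R) : Submodule R M where
  carrier := {x | ∀ a ∈ I, a • x ∈ N}
  add_mem' := fun hx hy a ha => by simpa [smul_add] using N.add_mem (hx a ha) (hy a ha)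
  zero_mem' := fun a _ => by simp
  smul_mem' := fun c x hx a ha => by
    rw [smul_comm]
    exact N.smul_mem c (hx a ha)

/-- `K` is a `p`-prime extension of `N`, i.e. `N` is a `p`-prime submodule of `K`. -/
def IsPrimeExt (p : Ideal R) (N K : Submodule R M) : Prop :=
  N < K ∧ N.colon K = p ∧ ∀ a : R, ∀ x ∈ K, a • x ∈ N → x ∈ N ∨ a ∈ p

/-- The associated primes of `T / N` for submodules `N ≤ T ≤ M`. -/
def assOf (R : Type*) {M : Type*} [CommRing R] [AddCommGroup M] [Module R M]
    (N T : Submodule R M) : Set (Ideal R) :=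
  associatedPrimes R ↥(T.map N.mkQ)

/-- `K` is a maximal `p`-prime extension of `N` inside `T`. -/
def IsMaximalPrimeExtIn (T : Submodule R M) (p : Ideal R) (N K : Submodule R M) : Prop :=
  K ≤ T ∧ IsPrimeExt p N K ∧ ∀ L ≤ T, IsPrimeExt p N L → ¬ K < L

/-- `K` is a regular `p`-prime extension of `N` inside `T`: a maximal `p`-prime
extension where `p` is a maximal element of `Ass (T/N)`. -/
def IsRegularPrimeExtIn (T : Submodule R M) (p : Ideal R) (N K : Submodule R M) : Prop :=
  IsMaximalPrimeExtIn T p N K ∧ Maximal (· ∈ assOf R N T) p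

/-- A regular prime extension (RPE) filtration inside `T` with primes `p i`. -/
def IsRPEFiltrationIn (T : Submodule R M) {n : ℕ}
    (F : Fin (n + 1) → Submodule R M) (p : Fin n → Ideal R) : Prop :=
  ∀ i : Fin n, IsRegularPrimeExtIn T (p i) (F i.castSucc) (F i.succ)

/-- The generalized prime ideal factorization of `N` in `T` is given by the multiset `s`:
there is an RPE filtration of `T` over `N` whose multiset of primes is `s`. -/
def HasGPIF (N T : Submodule R M) (s : Multiset (Ideal R)) : Prop :=
  ∃ (n : ℕ) (F : Fin (n + 1) → Submodule R M) (p : Fin n → Ideal R),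
    F 0 = N ∧ F (Fin.last n) = T ∧ IsRPEFiltrationIn T F p ∧ (List.ofFn p : Multiset (Ideal R)) = s

namespace MvPolynomial

variable {σ A : Type*} [CommRing A]

lemma ker_aeval_ite_eq_span_X_image (s : Set σ) [DecidablePred (· ∈ s)] :
    RingHom.ker (aeval (fun i => if i ∈ s then 0 else X i) :
        MvPolynomial σ A →ₐ[A] MvPolynomial σ A) = Ideal.span (X '' s) := by
  set e : MvPolynomial σ A →ₐ[A] MvPolynomial σ A := aeval fun i => if i ∈ s then 0 else X i
  have sub_mem : ∀ q, q - e q ∈ Ideal.span (X '' s) := by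
    intro q
    induction q using MvPolynomial.induction_on with
    | C a => simp [e]
    | add q r hq hr => simpa only [map_add, add_sub_add_comm] using add_mem hq hr
    | mul_X q i hq =>
      have hXi : X i - e (X i) ∈ Ideal.span (X '' s) := by
        by_cases hi : i ∈ s
        · simpa [e, hi] using Ideal.subset_span (Set.mem_image_of_mem X hi)
        · simp [e, hi]
      have h : q * X i - e (q * X i) = (q - e q) * X i + e q * (X i - e (X i)) := by
        rw [map_mul]; ring
      rw [h]
      exact add_mem (Ideal.mul_mem_right _ _ hq) (Ideal.mul_mem_left _ _ hXi)
  refine le_antisymm (fun q hq => by simpa [RingHom.mem_ker.mp hq] using sub_mem q) ?_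
  rw [Ideal.span_le]
  rintro _ ⟨i, hi, rfl⟩
  simp [e, hi]

lemma isPrime_span_X_image [IsDomain A] (s : Set σ) :
    (Ideal.span (X '' s : Set (MvPolynomial σ A))).IsPrime := by
  classical
  rw [← ker_aeval_ite_eq_span_X_image]
  exact RingHom.ker_isPrime _

lemma X_notMem_span_X_image [Nontrivial A] {s : Set σ} {i : σ} (hi : i ∉ s) :
    (X i : MvPolynomial σ A) ∉ Ideal.span (X '' s) := by
  classical
  rw [← ker_aeval_ite_eq_span_X_image, RingHom.mem_ker]
  simp [hi, X_ne_zero]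

end MvPolynomial

lemma Ideal.mem_span_pair_sq_colon {A : Type*} [CommRing A] {x y z : A}
    (hxy : x * y = z ^ 2) (hzy : z * y = x ^ 2) :
    y ∈ (Ideal.span {x, z} ^ 2).colon (Ideal.span {x, z} : Set A) := by
  refine Submodule.mem_colon.mpr fun a ha => ?_
  obtain ⟨u, v, rfl⟩ := Ideal.mem_span_pair.mp ha
  have hx : x ∈ Ideal.span {x, z} := Ideal.subset_span (by simp)
  have hz : z ∈ Ideal.span {x, z} := Ideal.subset_span (by simp)
  have h : y • (u * x + v * z) = u * (z * z) + v * (x * x) := by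
    rw [smul_eq_mul, ← pow_two, ← pow_two, ← hxy, ← hzy]; ring
  rw [h, pow_two]
  exact add_mem (Ideal.mul_mem_left _ _ (Ideal.mul_mem_mul hz hz))
    (Ideal.mul_mem_left _ _ (Ideal.mul_mem_mul hx hx))

section ColonSubmodule

variable {N K : Submodule R M} {p : Ideal R}

lemma le_colonSubmodule_iff : K ≤ colonSubmodule N p ↔ p ≤ N.colon (K : Set M) :=
  ⟨fun h _ ha => Submodule.mem_colon.mpr fun _ hx => h hx _ ha,
    fun h _ hx _ ha => Submodule.mem_colon.mp (h ha) _ hx⟩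

lemma le_colonSubmodule_self : N ≤ colonSubmodule N p := fun _ hx a _ => N.smul_mem a hx

lemma colon_bot_singleton_mkQ (x : M) :
    (⊥ : Submodule R (M ⧸ N)).colon {N.mkQ x} = N.colon {x} := by
  ext a
  rw [Submodule.mem_colon_singleton, Submodule.mem_colon_singleton, Submodule.mem_bot,
    ← map_smul, Submodule.mkQ_apply, Submodule.Quotient.mk_eq_zero]

lemma assOf_top : assOf R N ⊤ = associatedPrimes R (M ⧸ N) := by
  rw [assOf, Submodule.map_top, Submodule.range_mkQ]
  exact LinearEquiv.AssociatedPrimes.eq Submodule.topEquiv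

/-- Any `x ∉ N` killed by `p` modulo `N` has an associated prime above `ann (x + N) ⊇ p`,
which is `p` itself by maximality; so every element killing `x` modulo `N` lies in `p`. -/
lemma isPrimeExt_colonSubmodule [IsNoetherianRing R]
    (hp : Maximal (· ∈ associatedPrimes R (M ⧸ N)) p) :
    IsPrimeExt p N (colonSubmodule N p) := by
  obtain ⟨-, y, hy⟩ := isAssociatedPrime_iff.mp hp.prop
  obtain ⟨y, rfl⟩ := N.mkQ_surjective y
  rw [colon_bot_singleton_mkQ] at hy
  have hyp : ∀ a, a ∈ p ↔ a • y ∈ N := fun a => by rw [hy, Submodule.mem_colon_singleton]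
  have hyL : y ∈ colonSubmodule N p := fun a ha => (hyp a).mp ha
  have hyN : y ∉ N := fun h => hp.prop.isPrime.ne_top <|
    (Ideal.eq_top_iff_one p).mpr ((hyp 1).mpr (by rwa [one_smul]))
  refine ⟨SetLike.lt_iff_le_and_exists.mpr ⟨le_colonSubmodule_self, y, hyL, hyN⟩,
    le_antisymm (fun a ha => (hyp a).mpr (Submodule.mem_colon.mp ha y hyL))
      (le_colonSubmodule_iff.mp le_rfl), fun a x hx hax => or_iff_not_imp_left.mpr fun hxN => ?_⟩
  have hx0 : N.mkQ x ≠ 0 := by rwa [Ne, Submodule.mkQ_apply, Submodule.Quotient.mk_eq_zero]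
  obtain ⟨q, hq, hxq⟩ := exists_le_isAssociatedPrime_of_isNoetherianRing R _ hx0
  rw [colon_bot_singleton_mkQ] at hxq
  have hpx : p ≤ N.colon {x} := fun b hb => Submodule.mem_colon_singleton.mpr (hx b hb)
  exact hp.2 hq (hpx.trans hxq) (hxq (Submodule.mem_colon_singleton.mpr hax))

lemma IsRegularPrimeExtIn.eq_colonSubmodule [IsNoetherianRing R]
    (h : IsRegularPrimeExtIn ⊤ p N K) : K = colonSubmodule N p := by
  obtain ⟨⟨-, hK, hmax⟩, hass⟩ := h
  have hKL : K ≤ colonSubmodule N p := le_colonSubmodule_iff.mpr hK.2.1.ge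
  rw [assOf_top] at hass
  by_contra hne
  exact hmax _ le_top (isPrimeExt_colonSubmodule hass) (lt_of_le_of_ne hKL hne)

lemma sq_le_colon_top (hp : p ≤ (colonSubmodule N p).colon (⊤ : Submodule R M)) :
    p ^ 2 ≤ N.colon (⊤ : Submodule R M) := by
  rw [pow_two, Ideal.mul_le]
  intro a ha b hb
  refine Submodule.mem_colon.mpr fun m _ => ?_
  rw [mul_smul]
  exact Submodule.mem_colon.mp (hp hb) m trivial a ha

lemma colon_sq_le_of_isRegularPrimeExtIn [IsNoetherianRing R]
    (h₁ : IsRegularPrimeExtIn ⊤ p N K) (h₂ : K.colon (⊤ : Submodule R M) = p) :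
    (p ^ 2).colon (p : Set R) ≤ p := by
  rw [h₁.eq_colonSubmodule] at h₂
  intro r hr
  rw [← h₂]
  refine Submodule.mem_colon.mpr fun m _ a ha => ?_
  have hra : r • a ∈ p ^ 2 := Submodule.mem_colon.mp hr a ha
  rw [smul_smul, mul_comm, ← smul_eq_mul]
  exact Submodule.mem_colon.mp (sq_le_colon_top h₂.ge hra) m trivial

end ColonSubmodule

open MvPolynomial in
theorem no_gpif_p_sq.{u} (k : Type*) [Field k]
    (R : Type*) [CommRing R] [IsNoetherianRing R]
    (f : MvPolynomial (Fin 3) k →+* R) (hf : Function.Surjective f)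
    (hker : RingHom.ker f = Ideal.span {X 0 * X 1 - X 2 ^ 2, X 0 ^ 2 - X 1 * X 2})
    (p : Ideal R) (hp : p = (Ideal.span {X 0, X 2}).map f) :
    p.IsPrime ∧
      ∀ (M : Type u) [AddCommGroup M] [Module R M] [Module.Finite R M]
        (N N₁ : Submodule R M),
          ¬ (IsRegularPrimeExtIn ⊤ p N N₁ ∧ IsRegularPrimeExtIn ⊤ p N₁ ⊤) := by
  have hspan : Ideal.span {X 0, X 2} =
      Ideal.span (X '' {0, 2} : Set (MvPolynomial (Fin 3) k)) := by
    rw [Set.image_pair]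
  have : (Ideal.span {X 0, X 2} : Ideal (MvPolynomial (Fin 3) k)).IsPrime :=
    hspan ▸ isPrime_span_X_image _
  have hker_le : RingHom.ker f ≤ Ideal.span {X 0, X 2} := by
    rw [hker, Ideal.span_le, Set.insert_subset_iff, Set.singleton_subset_iff]
    exact ⟨Ideal.mem_span_pair.mpr ⟨X 1, -X 2, by ring⟩,
      Ideal.mem_span_pair.mpr ⟨X 0, -X 1, by ring⟩⟩
  have hy_notMem : f (X 1) ∉ p := by
    rw [hp, ← Ideal.mem_comap, Ideal.comap_map_of_surjective' f hf, sup_of_le_left hker_le, hspan]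
    exact X_notMem_span_X_image (by decide)
  have hy_colon : f (X 1) ∈ (p ^ 2).colon (p : Set R) := by
    rw [hp, Ideal.map_span, Set.image_pair]
    have hrel : ∀ q ∈ ({X 0 * X 1 - X 2 ^ 2, X 0 ^ 2 - X 1 * X 2} : Set _), f q = 0 :=
      fun q hq => RingHom.mem_ker.mp (hker ▸ Ideal.subset_span hq)
    apply Ideal.mem_span_pair_sq_colon
    · simpa [sub_eq_zero] using hrel _ (Set.mem_insert _ _)
    · have h := hrel _ (Set.mem_insert_of_mem _ rfl)
      rw [map_sub, sub_eq_zero] at h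
      simpa [mul_comm] using h.symm
  refine ⟨hp ▸ Ideal.map_isPrime_of_surjective hf hker_le, fun M _ _ _ N N₁ ⟨h₁, h₂⟩ => ?_⟩
  exact hy_notMem (colon_sq_le_of_isRegularPrimeExtIn h₁ h₂.1.2.1.2.1 hy_colon)
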